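/- Let d ≥ 1, n := d(d+1)/2, τ* := n+1, and let ḡ be an admissible metric with diophantine constant γ > 0, i.e. a symmetric positive-definite bilinear form on ℝ^d satisfying |Σ_{i≤j} ḡ_{ij} ℓ_{ij}| ≥ γ·(Σ_{i≤j}|ℓ_{ij}|)^{−τ*} for every nonzero integer vector ℓ ∈ ℤ^n. Fix 0 < ζ₁ < ζ₂ and ζ ∈ (ζ₁,ζ₂), and define Ω_j(ζ) := |j|_ḡ · √(|j|_ḡ² + ζ) for j ∈ ℤ^d ∖ {0}. For K ≤ N, let j₁, …, j_K ∈ ℤ^d ∖ {0} with |j_i| ≤ N for all i and |j₁|_ḡ < |j₂|_ḡ < ⋯ < |j_K|_ḡ, and let D be the determinant of the K×K matrix whose (n,i) entry (n = 0,…,K−1; i = 1,…,K) is the n-th derivative ∂_ζ^n Ω_{j_i}(ζ). Then there exist constants C > 0 (depending on K, d, γ, τ*, ζ₁, ζ₂) and η > 0 depending only on d such that |D| ≥ C / N^{η K²}. -/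

import Mathlib

open scoped BigOperators

namespace AG

abbrev Zd (d : ℕ) := Fin d → ℤ

noncomputable def enorm {d : ℕ} (j : Zd d) : ℝ := Real.sqrt (∑ i, ((j i : ℝ))^2)

/-- `|j|_g² = g(j,j)` for a quadratic form with coefficients `g`. -/
noncomputable def qform (d : ℕ) (g : Fin d → Fin d → ℝ) (j : Zd d) : ℝ :=
  ∑ i, ∑ k, g i k * (j i : ℝ) * (j k : ℝ)

/-- `τ* = d(d+1)/2 + 1`. -/
def tauStar (d : ℕ) : ℕ := d * (d + 1) / 2 + 1

/-- `g` is an admissible (γ-diophantine) metric: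
`|Σ_{i≤j} g_{ij} ℓ_{ij}| ≥ γ (Σ_{i≤j}|ℓ_{ij}|)^{−τ*}` for all nonzero `ℓ ∈ ℤ^{d(d+1)/2}`. -/
def Diophantine (d : ℕ) (g : Fin d → Fin d → ℝ) (γ : ℝ) : Prop :=
  ∀ ℓ : Fin d → Fin d → ℤ, (∃ i j, i ≤ j ∧ ℓ i j ≠ 0) →
    γ / (∑ i, ∑ j, if i ≤ j then (|ℓ i j| : ℝ) else 0) ^ tauStar d ≤
      |∑ i, ∑ j, if i ≤ j then g i j * (ℓ i j : ℝ) else 0|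

/-- The (rescaled) QHD frequencies `Ω_j(ζ) = |j|_ḡ √(|j|_ḡ² + ζ)`. -/
noncomputable def qhdFreq (d : ℕ) (gbar : Fin d → Fin d → ℝ) (j : Zd d) (ζ : ℝ) : ℝ :=
  Real.sqrt (qform d gbar j) * Real.sqrt (qform d gbar j + ζ)

/-!
Since `Ω_j(ζ) = |j|_ḡ (|j|_ḡ² + ζ)^{1/2}`, its `m`-th derivative is `c_m Ω_j(ζ) u_j^m` with
`c_m = (1/2)(1/2 - 1)⋯(1/2 - m + 1)` and `u_j = (|j|_ḡ² + ζ)⁻¹`, so the determinant factors as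
`∏ c_m · ∏ Ω_{j_i} · V(u_{j_1}, …, u_{j_K})` with `V` a Vandermonde determinant.
For symmetric `ḡ`, `|y|_ḡ² - |z|_ḡ²` is the pairing of `(ḡ_{ab})_{a ≤ b}` with an integer vector of
`ℓ¹`-norm at most `4 d² N²`, so the Diophantine condition separates distinct values of `|·|_ḡ²` on
the ball of radius `N` by at least `γ (4 d² N²)^{-τ*}`. Comparing with `z = 0` bounds each
`Ω_{j_i} ≥ |j_i|_ḡ²` from below, and since `|j_i|_ḡ² + ζ ≲ N²` each factor `u_{j_i} - u_{j_k}`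
of `V` is `≳ N^{-2τ*-4}`. Collecting the powers of `N` gives `η = 2τ* + 4`.
-/

open Finset

theorem iteratedDeriv_const_add_rpow (a r ζ : ℝ) (m : ℕ) :
    iteratedDeriv m (fun z => (a + z) ^ r) ζ = (descPochhammer ℝ m).eval r * (a + ζ) ^ (r - m) := by
  rw [congrFun (iteratedDeriv_comp_const_add m (fun x : ℝ => x ^ r) a) ζ,
    iteratedDeriv_eq_iterate, Real.iter_deriv_rpow_const]

theorem descPochhammer_eval_ne_zero {R : Type*} [CommRing R] [IsDomain R] {r : R}
    (hr : ∀ k : ℕ, r ≠ k) (m : ℕ) : (descPochhammer R m).eval r ≠ 0 := by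
  rw [descPochhammer_eval_eq_prod_range, prod_ne_zero_iff]
  exact fun k _ => sub_ne_zero.2 (hr k)

theorem descPochhammer_eval_one_half_ne_zero (m : ℕ) : (descPochhammer ℝ m).eval (1 / 2) ≠ 0 :=
  descPochhammer_eval_ne_zero (fun k h => by
    have : (2 * k : ℝ) = 1 := by linarith
    exact absurd (by exact_mod_cast this : 2 * k = 1) (by omega)) m

theorem det_of_mul_mul_pow {R : Type*} [CommRing R] {K : ℕ} (c s u : Fin K → R) :
    (Matrix.of fun m i : Fin K => c m * (s i * u i ^ (m : ℕ))).det =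
      (∏ m, c m) * ((∏ i, s i) * (Matrix.vandermonde u).det) := by
  rw [← Matrix.det_transpose (Matrix.vandermonde u)]
  exact (Matrix.det_mul_column c (Matrix.of fun m i : Fin K => s i * u i ^ (m : ℕ))).trans
    (congrArg _ (Matrix.det_mul_row s _))

theorem pow_le_abs_det_vandermonde {K : ℕ} (u : Fin K → ℝ) {δ : ℝ} (hδ : 0 ≤ δ)
    (hu : ∀ i k, i < k → δ ≤ |u k - u i|) :
    δ ^ (∑ i : Fin K, #(Ioi i)) ≤ |(Matrix.vandermonde u).det| := by
  rw [Matrix.det_vandermonde, abs_prod, ← prod_pow_eq_pow_sum]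
  refine prod_le_prod (fun _ _ => by positivity) fun i _ => ?_
  rw [abs_prod, ← prod_const]
  exact prod_le_prod (fun _ _ => hδ) fun k hk => hu i k (mem_Ioi.1 hk)

theorem div_sq_le_inv_sub_inv {a b G U : ℝ} (ha : 0 < a) (hab : a ≤ b) (hbU : b ≤ U)
    (hG : G ≤ b - a) : G / U ^ 2 ≤ a⁻¹ - b⁻¹ := by
  have hb : 0 < b := ha.trans_le hab
  rw [inv_sub_inv ha.ne' hb.ne', sq]
  exact div_le_div₀ (by linarith) hG (mul_pos ha hb)
    (mul_le_mul (hab.trans hbU) hbU hb.le (hb.le.trans hbU))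

theorem sum_sum_eq_sum_sum_le_of_symm {ι R : Type*} [Fintype ι] [LinearOrder ι] [Semiring R]
    (t : ι → ι → R) (ht : ∀ a b, t a b = t b a) :
    ∑ a, ∑ b, t a b = ∑ a, ∑ b, if a ≤ b then (if a = b then 1 else 2) * t a b else 0 := by
  calc ∑ a, ∑ b, t a b
      = ∑ a, ∑ b, ((if a ≤ b then t a b else 0) + if b < a then t b a else 0) := by
        refine sum_congr rfl fun a _ => sum_congr rfl fun b _ => ?_
        rcases le_or_gt a b with h | h
        · simp [h, not_lt_of_ge h]
        · simp [h, not_le_of_gt h, ht a b]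
    _ = ∑ a, ∑ b, ((if a ≤ b then t a b else 0) + if a < b then t a b else 0) := by
        simp only [sum_add_distrib]
        rw [sum_comm (f := fun a b => if b < a then t b a else 0)]
    _ = _ := by
        refine sum_congr rfl fun a _ => sum_congr rfl fun b _ => ?_
        rcases lt_trichotomy a b with h | rfl | h
        · simp [h.le, h.ne, h, two_mul]
        · simp
        · simp [not_le_of_gt h, not_lt_of_gt h]

theorem sum_card_Ioi_add_le_sq (K : ℕ) : ∑ i : Fin K, #(Ioi i) + K ≤ K ^ 2 :=
  calc ∑ i : Fin K, #(Ioi i) + K = ∑ i : Fin K, (#(Ioi i) + 1) := by simp [sum_add_distrib]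
    _ ≤ ∑ _i : Fin K, K := sum_le_sum fun i _ => by rw [Fin.card_Ioi]; omega
    _ = K ^ 2 := by simp [sq]

section QuadraticForm

variable {d : ℕ}

def upperPairing (g : Fin d → Fin d → ℝ) (ℓ : Fin d → Fin d → ℤ) : ℝ :=
  ∑ i, ∑ j, if i ≤ j then g i j * (ℓ i j : ℝ) else 0

def upperL1 (ℓ : Fin d → Fin d → ℤ) : ℝ :=
  ∑ i, ∑ j, if i ≤ j then (|ℓ i j| : ℝ) else 0

theorem diophantine_iff {g : Fin d → Fin d → ℝ} {γ : ℝ} :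
    Diophantine d g γ ↔ ∀ ℓ : Fin d → Fin d → ℤ, (∃ i j, i ≤ j ∧ ℓ i j ≠ 0) →
      γ / upperL1 ℓ ^ tauStar d ≤ |upperPairing g ℓ| :=
  Iff.rfl

theorem upperPairing_sub (g : Fin d → Fin d → ℝ) (ℓ ℓ' : Fin d → Fin d → ℤ) :
    upperPairing g (ℓ - ℓ') = upperPairing g ℓ - upperPairing g ℓ' := by
  simp only [upperPairing, ← sum_sub_distrib]
  refine sum_congr rfl fun a _ => sum_congr rfl fun b _ => ?_
  split_ifs <;> push_cast [Pi.sub_apply] <;> ring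

theorem exists_ne_zero_of_upperPairing_ne_zero {g : Fin d → Fin d → ℝ} {ℓ : Fin d → Fin d → ℤ}
    (h : upperPairing g ℓ ≠ 0) : ∃ i j, i ≤ j ∧ ℓ i j ≠ 0 := by
  contrapose! h
  exact sum_eq_zero fun a _ => sum_eq_zero fun b _ => by split_ifs with hab <;> simp [h a b, *]

theorem one_le_upperL1 {ℓ : Fin d → Fin d → ℤ} (h : ∃ i j, i ≤ j ∧ ℓ i j ≠ 0) :
    1 ≤ upperL1 ℓ := by
  obtain ⟨a, b, hab, hne⟩ := h
  have hterm : ∀ a b : Fin d, 0 ≤ if a ≤ b then (|ℓ a b| : ℝ) else 0 := fun _ _ => by positivity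
  calc (1 : ℝ) ≤ if a ≤ b then (|ℓ a b| : ℝ) else 0 := by
        rw [if_pos hab]; exact_mod_cast Int.one_le_abs hne
    _ ≤ ∑ b', if a ≤ b' then (|ℓ a b'| : ℝ) else 0 :=
        single_le_sum (fun b' _ => hterm a b') (mem_univ b)
    _ ≤ upperL1 ℓ :=
        single_le_sum (f := fun a' => ∑ b', if a' ≤ b' then (|ℓ a' b'| : ℝ) else 0)
          (fun a' _ => sum_nonneg fun b' _ => hterm a' b') (mem_univ a)

theorem upperL1_le {ℓ : Fin d → Fin d → ℤ} {M : ℝ} (hM0 : 0 ≤ M) (hM : ∀ i j, |(ℓ i j : ℝ)| ≤ M) :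
    upperL1 ℓ ≤ d ^ 2 * M := by
  calc upperL1 ℓ ≤ ∑ _a : Fin d, ∑ _b : Fin d, M :=
        sum_le_sum fun a _ => sum_le_sum fun b _ => by
          split_ifs
          · exact_mod_cast hM a b
          · exact hM0
    _ = d ^ 2 * M := by simp; ring

def qformCoeff (y : Zd d) : Fin d → Fin d → ℤ := fun i j => (if i = j then 1 else 2) * (y i * y j)

theorem qform_eq_upperPairing {g : Fin d → Fin d → ℝ} (hsym : ∀ i j, g i j = g j i) (y : Zd d) :
    qform d g y = upperPairing g (qformCoeff y) := by
  rw [qform, sum_sum_eq_sum_sum_le_of_symm _ fun a b => by rw [hsym]; ring]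
  refine sum_congr rfl fun a _ => sum_congr rfl fun b _ => ?_
  split_ifs <;> simp [qformCoeff, *] <;> ring

theorem abs_qformCoeff_sub_le {y z : Zd d} {N : ℝ} (hy : ∀ i, |(y i : ℝ)| ≤ N)
    (hz : ∀ i, |(z i : ℝ)| ≤ N) (i j : Fin d) :
    |((qformCoeff y - qformCoeff z) i j : ℝ)| ≤ 4 * N ^ 2 := by
  have hN : 0 ≤ N := (abs_nonneg _).trans (hy i)
  have hprod : ∀ w : Zd d, (∀ i, |(w i : ℝ)| ≤ N) → |(w i : ℝ) * w j| ≤ N ^ 2 := fun w hw => by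
    rw [abs_mul, sq]; exact mul_le_mul (hw i) (hw j) (abs_nonneg _) hN
  have hc : |(if i = j then 1 else 2 : ℝ)| ≤ 2 := by split_ifs <;> norm_num
  simp only [qformCoeff, Pi.sub_apply, ← mul_sub]
  push_cast
  rw [abs_mul]
  calc _ ≤ 2 * (N ^ 2 + N ^ 2) :=
        mul_le_mul hc ((abs_sub _ _).trans (add_le_add (hprod y hy) (hprod z hz)))
          (abs_nonneg _) zero_le_two
    _ = 4 * N ^ 2 := by ring

end QuadraticForm

theorem Diophantine.le_abs_qform_sub {d : ℕ} {g : Fin d → Fin d → ℝ} {γ : ℝ}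
    (hdio : Diophantine d g γ) (hγ : 0 ≤ γ) (hsym : ∀ i j, g i j = g j i) {N : ℝ} {y z : Zd d}
    (hy : ∀ i, |(y i : ℝ)| ≤ N) (hz : ∀ i, |(z i : ℝ)| ≤ N) (hne : qform d g y ≠ qform d g z) :
    γ / (4 * d ^ 2) ^ tauStar d / N ^ (2 * tauStar d) ≤ |qform d g y - qform d g z| := by
  set ℓ := qformCoeff y - qformCoeff z
  have hdiff : qform d g y - qform d g z = upperPairing g ℓ := by
    rw [upperPairing_sub, qform_eq_upperPairing hsym, qform_eq_upperPairing hsym]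
  have hℓ : ∃ i j, i ≤ j ∧ ℓ i j ≠ 0 :=
    exists_ne_zero_of_upperPairing_ne_zero (hdiff ▸ sub_ne_zero.2 hne)
  have hL1 : upperL1 ℓ ≤ 4 * d ^ 2 * N ^ 2 := by
    have := upperL1_le (by positivity) (abs_qformCoeff_sub_le hy hz)
    linarith
  rw [hdiff, pow_mul, div_div, ← mul_pow]
  calc γ / (4 * d ^ 2 * N ^ 2) ^ tauStar d ≤ γ / upperL1 ℓ ^ tauStar d := by
        have := one_le_upperL1 hℓ
        gcongr
    _ ≤ |upperPairing g ℓ| := diophantine_iff.1 hdio ℓ hℓ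

@[simp]
theorem qform_zero {d : ℕ} (g : Fin d → Fin d → ℝ) : qform d g 0 = 0 := by
  simp [qform]

theorem abs_apply_le_enorm {d : ℕ} (j : Zd d) (i : Fin d) : |(j i : ℝ)| ≤ enorm j := by
  rw [enorm, ← Real.sqrt_sq_eq_abs]
  exact Real.sqrt_le_sqrt (single_le_sum (f := fun k => ((j k : ℝ)) ^ 2)
    (fun _ _ => sq_nonneg _) (mem_univ i))

theorem qform_le {d : ℕ} (g : Fin d → Fin d → ℝ) {y : Zd d} {N : ℝ} (hy : ∀ i, |(y i : ℝ)| ≤ N) :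
    qform d g y ≤ (∑ i, ∑ k, |g i k|) * N ^ 2 := by
  have hN : ∀ i, 0 ≤ N := fun i => (abs_nonneg _).trans (hy i)
  rw [qform, sum_mul]
  refine sum_le_sum fun i _ => ?_
  rw [sum_mul]
  refine sum_le_sum fun k _ => (le_abs_self _).trans ?_
  rw [abs_mul, abs_mul, mul_assoc, sq]
  exact mul_le_mul_of_nonneg_left (mul_le_mul (hy i) (hy k) (abs_nonneg _) (hN i)) (abs_nonneg _)

theorem qform_add_le {d : ℕ} (g : Fin d → Fin d → ℝ) {y : Zd d} {N ζ ζ₂ : ℝ}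
    (hy : ∀ i, |(y i : ℝ)| ≤ N) (hN : 1 ≤ N) (hζ : ζ ≤ ζ₂) (hζ₂ : 0 ≤ ζ₂) :
    qform d g y + ζ ≤ (∑ i, ∑ k, |g i k| + ζ₂) * N ^ 2 := by
  have : ζ₂ ≤ ζ₂ * N ^ 2 := le_mul_of_one_le_right hζ₂ (one_le_pow₀ hN)
  linarith [qform_le g hy, add_mul (∑ i, ∑ k, |g i k|) ζ₂ (N ^ 2)]

theorem qform_pos {d : ℕ} {g : Fin d → Fin d → ℝ}
    (hpos : ∀ x : Fin d → ℝ, x ≠ 0 → 0 < ∑ i, ∑ k, g i k * x i * x k) {y : Zd d} (hy : y ≠ 0) :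
    0 < qform d g y :=
  hpos (fun i => (y i : ℝ)) fun h => hy (funext fun i => by simpa using congrFun h i)

theorem qform_le_qhdFreq {d : ℕ} (g : Fin d → Fin d → ℝ) (j : Zd d) {ζ : ℝ}
    (hj : 0 ≤ qform d g j) (hζ : 0 ≤ ζ) : qform d g j ≤ qhdFreq d g j ζ := by
  rw [qhdFreq]
  calc qform d g j = √(qform d g j) * √(qform d g j) := (Real.mul_self_sqrt hj).symm
    _ ≤ _ := by gcongr; linarith

theorem iteratedDeriv_qhdFreq {d : ℕ} (g : Fin d → Fin d → ℝ) (j : Zd d) {ζ : ℝ}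
    (hζ : 0 < qform d g j + ζ) (m : ℕ) :
    iteratedDeriv m (qhdFreq d g j) ζ =
      (descPochhammer ℝ m).eval (1 / 2) * (qhdFreq d g j ζ * (qform d g j + ζ)⁻¹ ^ m) := by
  have hfun : qhdFreq d g j = fun z => √(qform d g j) * (qform d g j + z) ^ (1 / 2 : ℝ) := by
    funext z; rw [qhdFreq, Real.sqrt_eq_rpow (qform d g j + z)]
  rw [hfun, iteratedDeriv_const_mul_field, iteratedDeriv_const_add_rpow, Real.rpow_sub hζ,
    Real.rpow_natCast, inv_pow, div_eq_mul_inv]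
  ring

theorem le_abs_det_iteratedDeriv_qhdFreq {d K : ℕ} (g : Fin d → Fin d → ℝ) (j : Fin K → Zd d)
    {ζ G U : ℝ} (hζ : 0 < ζ) (hG : 0 ≤ G) (hlow : ∀ i, G ≤ qform d g (j i))
    (hgap : ∀ i k, i < k → G ≤ qform d g (j k) - qform d g (j i))
    (hU : ∀ i, qform d g (j i) + ζ ≤ U) :
    (∏ m : Fin K, |(descPochhammer ℝ m).eval (1 / 2)|) *
        (G ^ K * (G / U ^ 2) ^ (∑ i : Fin K, #(Ioi i)))
      ≤ |(Matrix.of fun (m i : Fin K) =>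
          iteratedDeriv m (fun z => qhdFreq d g (j i) z) ζ).det| := by
  have hx : ∀ i, 0 < qform d g (j i) + ζ := fun i => by linarith [hlow i]
  have hM : (Matrix.of fun (m i : Fin K) => iteratedDeriv m (fun z => qhdFreq d g (j i) z) ζ) =
      Matrix.of fun (m i : Fin K) => (descPochhammer ℝ m).eval (1 / 2) *
        (qhdFreq d g (j i) ζ * (qform d g (j i) + ζ)⁻¹ ^ (m : ℕ)) := by
    ext m i
    exact iteratedDeriv_qhdFreq g (j i) (hx i) m
  rw [hM, det_of_mul_mul_pow, abs_mul, abs_mul, abs_prod, abs_prod]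
  gcongr
  · rw [show G ^ K = ∏ _i : Fin K, G by simp]
    exact prod_le_prod (fun _ _ => hG) fun i _ => (hlow i).trans <|
      (qform_le_qhdFreq g (j i) (hG.trans (hlow i)) hζ.le).trans (le_abs_self _)
  · refine pow_le_abs_det_vandermonde _ (by positivity) fun i k hik => ?_
    rw [abs_sub_comm]
    refine (div_sq_le_inv_sub_inv (hx i) ?_ (hU k) (by linarith [hgap i k hik])).trans
      (le_abs_self _)
    linarith [hgap i k hik]

theorem div_rpow_le_pow_mul_pow {N A L : ℝ} {τ K p : ℕ} (hN : 1 ≤ N) (hA : 0 ≤ A) (hL : 0 < L)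
    (hpK : p + K ≤ K ^ 2) :
    A ^ K * (A / L ^ 2) ^ p / N ^ ((2 * τ + 4 : ℝ) * K ^ 2)
      ≤ (A / N ^ (2 * τ)) ^ K * (A / N ^ (2 * τ) / (L * N ^ 2) ^ 2) ^ p := by
  have hN0 : 0 < N := one_pos.trans_le hN
  have hrhs : (A / N ^ (2 * τ)) ^ K * (A / N ^ (2 * τ) / (L * N ^ 2) ^ 2) ^ p
      = A ^ K * (A / L ^ 2) ^ p / N ^ (2 * τ * K + (2 * τ + 4) * p) := by
    simp only [div_eq_mul_inv, mul_pow, inv_pow, ← pow_mul, pow_add, mul_inv]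
    ring
  have hexp : (2 * τ * K + (2 * τ + 4) * p : ℕ) ≤ (2 * τ + 4) * K ^ 2 := by nlinarith
  rw [hrhs, ← Real.rpow_natCast N (2 * τ * K + _)]
  gcongr
  exact_mod_cast hexp

theorem stmt_17_general (d : ℕ) :
    ∃ η : ℝ, 0 < η ∧
      ∀ gbar : Fin d → Fin d → ℝ, (∀ i k, gbar i k = gbar k i) →
        (∀ x : Fin d → ℝ, x ≠ 0 → 0 < ∑ i, ∑ k, gbar i k * x i * x k) →
      ∀ γ : ℝ, 0 < γ → Diophantine d gbar γ →
      ∀ ζ₁ ζ₂ : ℝ, 0 < ζ₁ → ζ₁ < ζ₂ →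
      ∀ K : ℕ, ∃ C : ℝ, 0 < C ∧
        ∀ N : ℕ, K ≤ N →
        ∀ ζ : ℝ, ζ₁ < ζ → ζ < ζ₂ →
        ∀ j : Fin K → Zd d, (∀ i, j i ≠ 0) → (∀ i, enorm (j i) ≤ (N : ℝ)) →
          StrictMono (fun i => qform d gbar (j i)) →
          C / (N : ℝ) ^ (η * (K : ℝ) ^ 2) ≤
            |(Matrix.of fun (m i : Fin K) =>
              iteratedDeriv m (fun z => qhdFreq d gbar (j i) z) ζ).det| := by
  set τ := tauStar d
  refine ⟨2 * τ + 4, by positivity, fun gbar hsym hpos γ hγ hdio ζ₁ ζ₂ hζ₁ hζ₁₂ K => ?_⟩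
  rcases Nat.eq_zero_or_pos K with rfl | hK
  · exact ⟨1, one_pos, fun N _ ζ _ _ j _ _ _ => by simp⟩
  rcases Nat.eq_zero_or_pos d with rfl | hd
  · exact ⟨1, one_pos, fun N _ ζ _ _ j hj _ _ => absurd (Subsingleton.elim _ _) (hj ⟨0, hK⟩)⟩
  set A := γ / (4 * d ^ 2) ^ τ
  set L := ∑ a, ∑ b, |gbar a b| + ζ₂
  have hL : 0 < L := by have := hζ₁.trans hζ₁₂; positivity
  refine ⟨(∏ m : Fin K, |(descPochhammer ℝ m).eval (1 / 2)|) *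
    (A ^ K * (A / L ^ 2) ^ (∑ i : Fin K, #(Ioi i))), ?_, ?_⟩
  · exact mul_pos (prod_pos fun m _ => abs_pos.2 (descPochhammer_eval_one_half_ne_zero m))
      (by positivity)
  intro N hKN ζ hζ₁ζ hζζ₂ j hj hjN hmono
  have hN : (1 : ℝ) ≤ N := by exact_mod_cast hK.trans_le hKN
  have hcoord : ∀ i a, |(j i a : ℝ)| ≤ N := fun i a => (abs_apply_le_enorm _ a).trans (hjN i)
  have hlow : ∀ i, A / (N : ℝ) ^ (2 * τ) ≤ qform d gbar (j i) := fun i => by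
    have hx := qform_pos hpos (hj i)
    simpa [abs_of_pos hx] using
      hdio.le_abs_qform_sub hγ.le hsym (z := 0) (hcoord i) (fun _ => by simp)
        (by simpa using hx.ne')
  rw [mul_div_assoc]
  refine (mul_le_mul_of_nonneg_left (div_rpow_le_pow_mul_pow hN (by positivity) hL ?_)
    (by positivity)).trans (le_abs_det_iteratedDeriv_qhdFreq gbar j (hζ₁.trans hζ₁ζ)
      (by positivity) hlow (fun i k hik => ?_) (fun i => ?_))
  · exact sum_card_Ioi_add_le_sq K
  · have hlt := hmono hik
    simpa [abs_of_pos (sub_pos.2 hlt)] using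
      hdio.le_abs_qform_sub hγ.le hsym (hcoord k) (hcoord i) hlt.ne'
  · exact qform_add_le gbar (hcoord i) hN hζζ₂.le (hζ₁.trans hζ₁₂).le

/-- Lemma `determinante idrodinamico`, QHD.
For an admissible metric `ḡ` and `ζ ∈ (ζ₁,ζ₂)`, the Vandermonde-type determinant of the
matrix `(∂_ζ^n Ω_{j_i}(ζ))_{n,i}` built on `K ≤ N` nonzero sites `|j_i| ≤ N` with
strictly increasing `|j_i|_ḡ` is bounded below by `C/N^{ηK²}`, with `η > 0` depending
only on `d`. -/
theorem stmt_17 (d : ℕ) (hd : 1 ≤ d) :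
    ∃ η : ℝ, 0 < η ∧
      ∀ gbar : Fin d → Fin d → ℝ, (∀ i k, gbar i k = gbar k i) →
        (∀ x : Fin d → ℝ, x ≠ 0 → 0 < ∑ i, ∑ k, gbar i k * x i * x k) →
      ∀ γ : ℝ, 0 < γ → Diophantine d gbar γ →
      ∀ ζ₁ ζ₂ : ℝ, 0 < ζ₁ → ζ₁ < ζ₂ →
      ∀ K : ℕ, ∃ C : ℝ, 0 < C ∧
        ∀ N : ℕ, K ≤ N →
        ∀ ζ : ℝ, ζ₁ < ζ → ζ < ζ₂ →
        ∀ j : Fin K → Zd d, (∀ i, j i ≠ 0) → (∀ i, enorm (j i) ≤ (N : ℝ)) →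
          StrictMono (fun i => qform d gbar (j i)) →
          C / (N : ℝ) ^ (η * (K : ℝ) ^ 2) ≤
            |(Matrix.of fun (m i : Fin K) =>
              iteratedDeriv m (fun z => qhdFreq d gbar (j i) z) ζ).det| :=
  stmt_17_general d

end AG
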